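/- Let S be a decision rule system with n(S) > 0 and let α = {a_{i_1}=δ_1, …, a_{i_m}=δ_m} be a consistent equation system such that a_{i_1}, …, a_{i_m} ∈ A(S) and, for j = 1, …, m, δ_j ∈ EV_S(a_{i_j}). If S_α is nonempty and n(S_α) > 0, then β((S_α)^max) ≤ h_EAR(S) and ln|(S_α)^max| ≤ h_EAR(S) · ln(k(S)+1); consequently β((S_α)^max) · ln|(S_α)^max| + 1 ≤ h_EAR(S)² · ln(k(S)+1) + 1. -/

import Mathlib

/-! Formalization of decision rule systems and decision trees
(Durdymyradov & Moshkov, "Greedy Algorithm for Inference of Decision Trees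
from Decision Rule Systems"). -/

/-- Values of attributes: `some δ` is a natural number value, `none` is the
special symbol `*` (interpreted as a value not occurring in the system). -/
abbrev Val := Option ℕ

/-- A decision rule `(a_{i₁}=δ₁) ∧ ⋯ ∧ (a_{iₘ}=δₘ) → σ`: the left-hand side
is a finite set of equations (attribute, value), the right-hand side a decision. -/
structure Rule where
  lhs : Finset (ℕ × ℕ)
  rhs : ℕ
deriving DecidableEq

namespace Rule

/-- `A(r)`: the set of attributes of a rule. -/
def attrs (r : Rule) : Finset ℕ := r.lhs.image Prod.fst

/-- `K(r)`: the equation system of the left-hand side of a rule. -/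
def K (r : Rule) : Finset (ℕ × Val) := r.lhs.image (fun p => (p.1, some p.2))

/-- the length of a rule -/
def len (r : Rule) : ℕ := r.lhs.card

/-- A rule is wellformed if the attributes in its left-hand side are pairwise
different, i.e. each attribute carries at most one equation. -/
def WF (r : Rule) : Prop := ∀ p ∈ r.lhs, ∀ q ∈ r.lhs, p.1 = q.1 → p = q

end Rule

/-- `A(S)`: the set of attributes of a system of decision rules. -/
def attrsS (S : Finset Rule) : Finset ℕ := S.biUnion Rule.attrs

/-- `n(S) = |A(S)|`. -/
def nS (S : Finset Rule) : ℕ := (attrsS S).card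

/-- `d(S)`: maximum length of a rule of `S`. -/
def dS (S : Finset Rule) : ℕ := S.sup Rule.len

/-- `V_S(a)`: the set of values δ such that the equation `a = δ` occurs in `S`. -/
def VS (S : Finset Rule) (a : ℕ) : Finset ℕ :=
  S.biUnion (fun r => (r.lhs.filter (fun p => p.1 = a)).image Prod.snd)

/-- `EV_S(a) = V_S(a) ∪ {*}`. -/
def EVS (S : Finset Rule) (a : ℕ) : Finset Val := insert none ((VS S a).image some)

/-- `k(S) = max{|V_S(a)| : a ∈ A(S)}`. -/
def kS (S : Finset Rule) : ℕ := (attrsS S).sup (fun a => (VS S a).card)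

/-- A (wellformed) decision rule system: a finite nonempty set of wellformed rules. -/
def SysWF (S : Finset Rule) : Prop := S.Nonempty ∧ ∀ r ∈ S, r.WF

/-- An equation system is consistent if it does not assign two different values
to the same attribute. -/
def Consistent (E : Finset (ℕ × Val)) : Prop :=
  ∀ p ∈ E, ∀ q ∈ E, p.1 = q.1 → p.2 = q.2

instance : DecidablePred Consistent := fun E => by unfold Consistent; infer_instance

/-- `r_α`: the rule obtained from `r` by deleting from its left-hand side all
equations belonging to `α`. -/
def Rule.restrict (r : Rule) (α : Finset (ℕ × Val)) : Rule :=
  ⟨r.lhs.filter (fun p => ((p.1, (some p.2 : Val)) ∉ α)), r.rhs⟩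

/-- `S_α`: the set of rules `r_α` for `r ∈ S` with `K(r) ∪ α` consistent. -/
def sysRestrict (S : Finset Rule) (α : Finset (ℕ × Val)) : Finset Rule :=
  (S.filter (fun r => Consistent (r.K ∪ α))).image (fun r => r.restrict α)

/-- Extended decision trees: terminal nodes are labeled with sets of rules, and a
working node is labeled with an attribute and has one child for each value
(only the children corresponding to values in `EV_S(a)` are relevant). -/
inductive DT where
  | leaf (τ : Finset Rule) : DT
  | node (a : ℕ) (c : Val → DT) : DT

/-- `Γ` is an extended decision tree over `S`: working nodes are labeled with
attributes of `A(S)` (with edges labeled by the elements of `EV_S(a)`),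
terminal nodes with subsets of `S`. -/
def DT.Over (S : Finset Rule) : DT → Prop
  | .leaf τ => τ ⊆ S
  | .node a c => a ∈ attrsS S ∧ ∀ v ∈ EVS S a, DT.Over S (c v)

/-- `h(Γ)`: the maximum number of working nodes in a complete path of `Γ`. -/
def DT.depth (S : Finset Rule) : DT → ℕ
  | .leaf _ => 0
  | .node a c => 1 + (EVS S a).sup (fun v => DT.depth S (c v))

/-- The number of terminal nodes of `Γ`. -/
def DT.numLeaves (S : Finset Rule) : DT → ℕ
  | .leaf _ => 1
  | .node a c => ∑ v ∈ EVS S a, DT.numLeaves S (c v)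

/-- `Γ` solves `EAR(S)` starting from the already accumulated equation system `E`:
for every complete path `ξ` with consistent `K(ξ)`, every rule of the terminal
label `τ(ξ)` satisfies `K(r) ⊆ K(ξ)`, and every other rule of `S` has
`K(r) ∪ K(ξ)` inconsistent. -/
def DT.SolvesFrom (S : Finset Rule) : DT → Finset (ℕ × Val) → Prop
  | .leaf τ, E => Consistent E →
      (∀ r ∈ τ, r.K ⊆ E) ∧ ∀ r ∈ S, r ∉ τ → ¬ Consistent (r.K ∪ E)
  | .node a c, E => ∀ v ∈ EVS S a, DT.SolvesFrom S (c v) (insert (a, v) E)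

/-- `Γ` is a decision tree over `S` solving the problem `EAR(S)`. -/
def DT.SolvesEAR (S : Finset Rule) (Γ : DT) : Prop := Γ.Over S ∧ Γ.SolvesFrom S ∅

/-- `h_EAR(S)`: the minimum depth of a decision tree over `S` solving `EAR(S)`. -/
noncomputable def hEAR (S : Finset Rule) : ℕ :=
  sInf {n | ∃ Γ : DT, DT.SolvesEAR S Γ ∧ DT.depth S Γ = n}

/-- A node cover of the hypergraph `G(S)`. -/
def IsNodeCover (S : Finset Rule) (B : Finset ℕ) : Prop :=
  B ⊆ attrsS S ∧ ∀ r ∈ S, r.attrs.Nonempty → (r.attrs ∩ B).Nonempty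

/-- `β(S)`: the minimum cardinality of a node cover of `G(S)`. -/
noncomputable def betaS (S : Finset Rule) : ℕ :=
  sInf {k | ∃ B : Finset ℕ, IsNodeCover S B ∧ B.card = k}

/-- `M` is a possible choice of `S^max`: a set of rules of `S` of length `d(S)`
containing exactly one representative from each equivalence class
(`r₁ ∼ r₂ iff K(r₁) = K(r₂)`) of the set of rules of length `d(S)`, and
no other rules. -/
def IsMaxSet (S M : Finset Rule) : Prop :=
  (∀ r ∈ M, r ∈ S ∧ r.len = dS S) ∧
  (∀ r ∈ S, r.len = dS S → ∃ r' ∈ M, r'.K = r.K) ∧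
  (∀ r₁ ∈ M, ∀ r₂ ∈ M, r₁.K = r₂.K → r₁ = r₂)

/-- `δ̄ ∈ EV(S)`, a tuple represented as a function on attributes. -/
def InEV (S : Finset Rule) (f : ℕ → Val) : Prop := ∀ a ∈ attrsS S, f a ∈ EVS S a

/-- `K(S, δ̄)`. -/
def KofTuple (S : Finset Rule) (f : ℕ → Val) : Finset (ℕ × Val) :=
  (attrsS S).image (fun a => (a, f a))

/-- The rule `r` is realizable for the tuple `δ̄`, i.e. `K(r) ⊆ K(S, δ̄)`. -/
def Realizable (S : Finset Rule) (f : ℕ → Val) (r : Rule) : Prop :=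
  r.K ⊆ KofTuple S f

instance (S : Finset Rule) (f : ℕ → Val) : DecidablePred (Realizable S f) :=
  fun r => by unfold Realizable; infer_instance

/-! Take a decision tree `Γ` of depth `h_EAR(S)` solving `EAR(S)`. Complete `α` to an assignment
by answering `*` outside its attributes and follow that assignment through `Γ`: at the leaf,
every rule of `S` is either realized by the path or contradicted by it. A rule `r` with
`r_α ∈ (S_α)^max` cannot be realized, because `r_α` has a nonempty left-hand side, so it is
contradicted at an attribute that survives in `r_α`. Hence the attributes queried on this one
path cover `G((S_α)^max)`, and `β ≤ h_EAR(S)`.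

For the second bound, send each `r_α ∈ (S_α)^max` to the path of an assignment extending
`K(r) ∪ α`. That path realizes `r`, so two rules sent to the same path have the same restricted
left-hand sides and therefore coincide; and `Γ` has at most `(k(S) + 1)^h_EAR(S)` paths. -/

open Finset

namespace Rule

lemma mem_attrs_of_mem_K {r : Rule} {p : ℕ × Val} (hp : p ∈ r.K) : p.1 ∈ r.attrs := by
  obtain ⟨q, hq, rfl⟩ := mem_image.mp hp
  exact mem_image_of_mem _ hq

lemma K_nonempty_iff {r : Rule} : r.K.Nonempty ↔ r.lhs.Nonempty := image_nonempty

lemma K_restrict (r : Rule) (α : Finset (ℕ × Val)) :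
    (r.restrict α).K = r.K.filter (· ∉ α) := by
  ext p
  simp only [K, restrict, mem_image, mem_filter]
  constructor
  · rintro ⟨q, ⟨hq, hqα⟩, rfl⟩
    exact ⟨⟨q, hq, rfl⟩, hqα⟩
  · rintro ⟨⟨q, hq, rfl⟩, hqα⟩
    exact ⟨q, ⟨hq, hqα⟩, rfl⟩

lemma K_restrict_mono {r₁ r₂ : Rule} {α : Finset (ℕ × Val)} (h : r₁.K ⊆ r₂.K ∪ α) :
    (r₁.restrict α).K ⊆ (r₂.restrict α).K := by
  intro p hp
  rw [K_restrict, mem_filter] at hp ⊢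
  exact ⟨(mem_union.mp (h hp.1)).resolve_right hp.2, hp.2⟩

lemma mem_EVS_of_mem_K {S : Finset Rule} {r : Rule} (hr : r ∈ S) {p : ℕ × Val} (hp : p ∈ r.K) :
    p.2 ∈ EVS S p.1 := by
  obtain ⟨q, hq, rfl⟩ := mem_image.mp hp
  refine mem_insert_of_mem (mem_image_of_mem _ (mem_biUnion.mpr ⟨r, hr, ?_⟩))
  exact mem_image.mpr ⟨q, mem_filter.mpr ⟨hq, rfl⟩, rfl⟩

end Rule

lemma mem_sysRestrict {S : Finset Rule} {α : Finset (ℕ × Val)} {r' : Rule} :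
    r' ∈ sysRestrict S α ↔ ∃ r ∈ S, Consistent (r.K ∪ α) ∧ r.restrict α = r' := by
  simp [sysRestrict, and_assoc]

lemma card_EVS_le {S : Finset Rule} {a : ℕ} (ha : a ∈ attrsS S) :
    (EVS S a).card ≤ kS S + 1 := by
  rw [EVS, card_insert_of_notMem (by simp), card_image_of_injective _ (Option.some_injective ℕ)]
  exact Nat.add_le_add_right (le_sup (f := fun a => (VS S a).card) ha) 1

lemma dS_pos_of_nS_pos {T : Finset Rule} (h : 0 < nS T) : 0 < dS T := by
  obtain ⟨a, ha⟩ := card_pos.mp h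
  obtain ⟨r, hr, har⟩ := mem_biUnion.mp ha
  obtain ⟨q, hq, -⟩ := mem_image.mp har
  exact (card_pos.mpr ⟨q, hq⟩).trans_le (le_sup (f := Rule.len) hr)

section Assignments

def Satisfies (f : ℕ → Val) (E : Finset (ℕ × Val)) : Prop := ∀ p ∈ E, f p.1 = p.2

variable {f : ℕ → Val} {E F : Finset (ℕ × Val)}

lemma satisfies_empty : Satisfies f ∅ := by simp [Satisfies]

lemma Satisfies.consistent (h : Satisfies f E) : Consistent E := fun p hp q hq hpq => by
  rw [← h p hp, ← h q hq, hpq]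

lemma Satisfies.mono (h : Satisfies f F) (hEF : E ⊆ F) : Satisfies f E :=
  fun p hp => h p (hEF hp)

lemma Satisfies.union (hE : Satisfies f E) (hF : Satisfies f F) : Satisfies f (E ∪ F) := by
  intro p hp
  rcases mem_union.mp hp with hp | hp
  exacts [hE p hp, hF p hp]

lemma Satisfies.insert (h : Satisfies f E) (a : ℕ) : Satisfies f (insert (a, f a) E) := by
  intro p hp
  rcases mem_insert.mp hp with rfl | hp
  exacts [rfl, h p hp]

lemma Consistent.mono (h : Consistent F) (hEF : E ⊆ F) : Consistent E :=
  fun p hp q hq => h p (hEF hp) q (hEF hq)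

lemma Consistent.exists_conflict (hE : Consistent E) (hF : Consistent F)
    (h : ¬ Consistent (E ∪ F)) : ∃ p ∈ E, ∃ q ∈ F, p.1 = q.1 ∧ p.2 ≠ q.2 := by
  simp only [Consistent, not_forall] at h
  obtain ⟨p, hp, q, hq, hpq, hne⟩ := h
  rcases mem_union.mp hp with hp | hp <;> rcases mem_union.mp hq with hq | hq
  · exact absurd (hE p hp q hq hpq) hne
  · exact ⟨p, hp, q, hq, hpq, hne⟩
  · exact ⟨q, hq, p, hp, hpq.symm, Ne.symm hne⟩
  · exact absurd (hF p hp q hq hpq) hne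

open Classical in
/-- Extends a consistent `E` to an assignment that is `*` off the attributes of `E`. -/
noncomputable def valAt (E : Finset (ℕ × Val)) (a : ℕ) : Val :=
  if h : ∃ v, (a, v) ∈ E then h.choose else none

lemma valAt_eq_none_or_mem (E : Finset (ℕ × Val)) (a : ℕ) :
    valAt E a = none ∨ (a, valAt E a) ∈ E := by
  unfold valAt
  split_ifs with h
  · exact Or.inr h.choose_spec
  · exact Or.inl rfl

lemma satisfies_valAt (hE : Consistent E) : Satisfies (valAt E) E := by
  intro p hp
  have h : ∃ v, (p.1, v) ∈ E := ⟨p.2, hp⟩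
  rw [valAt, dif_pos h]
  exact hE _ h.choose_spec _ hp rfl

lemma valAt_mem_EVS {S : Finset Rule} (hE : ∀ p ∈ E, p.2 ∈ EVS S p.1) (a : ℕ) :
    valAt E a ∈ EVS S a := by
  rcases valAt_eq_none_or_mem E a with h | h
  · rw [h]
    exact mem_insert_self _ _
  · exact hE (a, valAt E a) h

lemma Rule.K_subset_of_satisfies_valAt {r : Rule} (h : Satisfies (valAt E) r.K) : r.K ⊆ E := by
  intro p hp
  obtain ⟨q, -, rfl⟩ := mem_image.mp hp
  have hq : valAt E q.1 = some q.2 := h _ hp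
  rcases valAt_eq_none_or_mem E q.1 with h' | h'
  · exact absurd (hq ▸ h') (Option.some_ne_none _)
  · rwa [hq] at h'

end Assignments

namespace DT

variable {S : Finset Rule} {f : ℕ → Val}

/-- The equation system `K(ξ)` of the path `ξ` that answers each query `a` with `f a`. -/
def pathFrom (f : ℕ → Val) : DT → Finset (ℕ × Val) → Finset (ℕ × Val)
  | .leaf _, E => E
  | .node a c, E => (c (f a)).pathFrom f (insert (a, f a) E)

def paths (S : Finset Rule) : DT → Finset (ℕ × Val) → Finset (Finset (ℕ × Val))
  | .leaf _, E => {E}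
  | .node a c, E => (EVS S a).biUnion fun v => (c v).paths S (insert (a, v) E)

lemma satisfies_pathFrom : ∀ (Γ : DT) {E : Finset (ℕ × Val)},
    Satisfies f E → Satisfies f (Γ.pathFrom f E)
  | .leaf _, _, h => h
  | .node a c, _, h => satisfies_pathFrom (c (f a)) (h.insert a)

lemma card_pathFrom_le (hf : ∀ a, f a ∈ EVS S a) :
    ∀ (Γ : DT) (E : Finset (ℕ × Val)), (Γ.pathFrom f E).card ≤ E.card + Γ.depth S
  | .leaf _, _ => le_refl _
  | .node a c, E => calc
      ((c (f a)).pathFrom f (insert (a, f a) E)).card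
          ≤ (insert (a, f a) E).card + (c (f a)).depth S := card_pathFrom_le hf _ _
      _ ≤ E.card + 1 + (EVS S a).sup (fun v => (c v).depth S) :=
          add_le_add (card_insert_le _ _) (le_sup (f := fun v => (c v).depth S) (hf a))
      _ = E.card + (DT.node a c).depth S := by rw [depth, add_assoc]

lemma pathFrom_mem_paths (hf : ∀ a, f a ∈ EVS S a) :
    ∀ (Γ : DT) (E : Finset (ℕ × Val)), Γ.pathFrom f E ∈ Γ.paths S E
  | .leaf _, E => mem_singleton_self E
  | .node a c, _ => mem_biUnion.mpr ⟨f a, hf a, pathFrom_mem_paths hf (c (f a)) _⟩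

lemma card_paths_le : ∀ (Γ : DT) (E : Finset (ℕ × Val)), Γ.Over S →
    (Γ.paths S E).card ≤ (kS S + 1) ^ Γ.depth S
  | .leaf _, _, _ => by simp [paths, depth]
  | .node a c, E, ⟨ha, hc⟩ => by
      set d := (EVS S a).sup fun v => (c v).depth S
      calc ((EVS S a).biUnion fun v => (c v).paths S (insert (a, v) E)).card
          ≤ ∑ v ∈ EVS S a, ((c v).paths S (insert (a, v) E)).card := card_biUnion_le
        _ ≤ ∑ _v ∈ EVS S a, (kS S + 1) ^ d := sum_le_sum fun v hv =>
            (card_paths_le (c v) _ (hc v hv)).trans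
              (Nat.pow_le_pow_right (Nat.succ_pos _) (le_sup (f := fun v => (c v).depth S) hv))
        _ = (EVS S a).card * (kS S + 1) ^ d := by rw [sum_const, smul_eq_mul]
        _ ≤ (kS S + 1) * (kS S + 1) ^ d := Nat.mul_le_mul_right _ (card_EVS_le ha)
        _ = (kS S + 1) ^ (DT.node a c).depth S := by rw [depth, pow_add, pow_one]

lemma SolvesFrom.subset_or_inconsistent (hf : ∀ a, f a ∈ EVS S a) :
    ∀ {Γ : DT} {E : Finset (ℕ × Val)}, Γ.SolvesFrom S E → Satisfies f E →
      ∀ r ∈ S, r.K ⊆ Γ.pathFrom f E ∨ ¬ Consistent (r.K ∪ Γ.pathFrom f E)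
  | .leaf τ, _, hsol, hE, r, hr => by
      obtain ⟨hin, hout⟩ := hsol hE.consistent
      by_cases hrτ : r ∈ τ
      exacts [Or.inl (hin r hrτ), Or.inr (hout r hr hrτ)]
  | .node a _, _, hsol, hE, r, hr =>
      subset_or_inconsistent hf (hsol (f a) (hf a)) (hE.insert a) r hr

lemma SolvesFrom.K_subset_pathFrom (hf : ∀ a, f a ∈ EVS S a) {Γ : DT}
    {E : Finset (ℕ × Val)} (hsol : Γ.SolvesFrom S E) (hE : Satisfies f E) {r : Rule}
    (hr : r ∈ S) (hrf : Satisfies f r.K) : r.K ⊆ Γ.pathFrom f E :=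
  (hsol.subset_or_inconsistent hf hE r hr).resolve_right fun h =>
    h (hrf.union (satisfies_pathFrom Γ hE)).consistent

def full (S : Finset Rule) : List ℕ → Finset (ℕ × Val) → DT
  | [], E => .leaf (S.filter (·.K ⊆ E))
  | a :: l, E => .node a fun v => full S l (insert (a, v) E)

lemma full_over : ∀ (l : List ℕ) (E : Finset (ℕ × Val)), (∀ a ∈ l, a ∈ attrsS S) →
    (full S l E).Over S
  | [], _, _ => filter_subset _ _
  | a :: l, _, h => ⟨h a List.mem_cons_self,
      fun _ _ => full_over l _ fun b hb => h b (List.mem_cons_of_mem a hb)⟩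

lemma full_solvesFrom : ∀ (l : List ℕ) (E : Finset (ℕ × Val)),
    (∀ a ∈ attrsS S, a ∈ l ∨ ∃ v, (a, v) ∈ E) → (full S l E).SolvesFrom S E
  | [], E, h => fun _ => by
      refine ⟨fun r hr => (mem_filter.mp hr).2, fun r hr hrτ hcons => hrτ ?_⟩
      refine mem_filter.mpr ⟨hr, fun p hp => ?_⟩
      have hpa := mem_biUnion.mpr ⟨r, hr, Rule.mem_attrs_of_mem_K hp⟩
      obtain ⟨v, hv⟩ := (h p.1 hpa).resolve_left List.not_mem_nil
      have hpv : p.2 = v := hcons _ (mem_union_left _ hp) _ (mem_union_right _ hv) rfl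
      rwa [← hpv] at hv
  | a :: l, E, h => fun v _ => full_solvesFrom l _ fun b hb => by
      rcases h b hb with hbl | ⟨w, hw⟩
      · rcases List.mem_cons.mp hbl with rfl | hbl
        · exact Or.inr ⟨v, mem_insert_self _ _⟩
        · exact Or.inl hbl
      · exact Or.inr ⟨w, mem_insert_of_mem hw⟩

lemma exists_solvesEAR_depth_eq_hEAR (S : Finset Rule) :
    ∃ Γ : DT, Γ.SolvesEAR S ∧ Γ.depth S = hEAR S :=
  Nat.sInf_mem (s := {n | ∃ Γ : DT, Γ.SolvesEAR S ∧ Γ.depth S = n})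
    ⟨_, full S (attrsS S).toList ∅,
      ⟨full_over _ _ fun _ ha => mem_toList.mp ha,
        full_solvesFrom _ _ fun _ ha => Or.inl (mem_toList.mpr ha)⟩, rfl⟩

end DT

section RoundBounds

variable {S M : Finset Rule} {α : Finset (ℕ × Val)} {Γ : DT}

lemma betaS_le_depth (hcons : Consistent α) (hα : ∀ p ∈ α, p.2 ∈ EVS S p.1)
    (hM : ∀ r' ∈ M, r' ∈ sysRestrict S α ∧ r'.lhs.Nonempty) (hΓ : Γ.SolvesFrom S ∅) :
    betaS M ≤ Γ.depth S := by
  have hf : ∀ a, valAt α a ∈ EVS S a := valAt_mem_EVS hα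
  set P := Γ.pathFrom (valAt α) ∅
  have hP : Satisfies (valAt α) P := DT.satisfies_pathFrom Γ satisfies_empty
  have hcover : IsNodeCover M (P.image Prod.fst ∩ attrsS M) := by
    refine ⟨inter_subset_right, fun r' hr' _ => ?_⟩
    obtain ⟨⟨r, hr, hrα, rfl⟩, hne⟩ := (hM r' hr').imp_left mem_sysRestrict.mp
    rcases hΓ.subset_or_inconsistent hf satisfies_empty r hr with hsub | hinc
    · obtain ⟨p, hp⟩ := Rule.K_nonempty_iff.mpr hne
      rw [Rule.K_restrict, mem_filter] at hp
      exact absurd (Rule.K_subset_of_satisfies_valAt (hP.mono hsub) hp.1) hp.2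
    · obtain ⟨p, hp, q, hq, hpq, hne⟩ :=
        (hrα.mono subset_union_left).exists_conflict hP.consistent hinc
      have hpα : p ∉ α := fun h => hne (by
        rw [← satisfies_valAt hcons p h, ← hP q hq, hpq])
      have hpr : p.1 ∈ (r.restrict α).attrs :=
        Rule.mem_attrs_of_mem_K (by rw [Rule.K_restrict, mem_filter]; exact ⟨hp, hpα⟩)
      exact ⟨p.1, mem_inter.mpr ⟨hpr, mem_inter.mpr
        ⟨mem_image.mpr ⟨q, hq, hpq.symm⟩, mem_biUnion.mpr ⟨_, hr', hpr⟩⟩⟩⟩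
  calc betaS M ≤ (P.image Prod.fst ∩ attrsS M).card := Nat.sInf_le ⟨_, hcover, rfl⟩
    _ ≤ P.card := (card_le_card inter_subset_left).trans card_image_le
    _ ≤ (∅ : Finset (ℕ × Val)).card + Γ.depth S := DT.card_pathFrom_le hf Γ ∅
    _ = Γ.depth S := zero_add _

lemma card_le_pow_depth (hα : ∀ p ∈ α, p.2 ∈ EVS S p.1) (hM : M ⊆ sysRestrict S α)
    (hMK : ∀ r₁ ∈ M, ∀ r₂ ∈ M, r₁.K = r₂.K → r₁ = r₂) (hΓ : Γ.SolvesEAR S) :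
    M.card ≤ (kS S + 1) ^ Γ.depth S := by
  have hlift : ∀ r' ∈ M, ∃ r ∈ S, Consistent (r.K ∪ α) ∧ r.restrict α = r' :=
    fun r' hr' => mem_sysRestrict.mp (hM hr')
  choose! ρ hρS hρα hρ using hlift
  let path (r' : Rule) := Γ.pathFrom (valAt ((ρ r').K ∪ α)) ∅
  have hEV : ∀ r' ∈ M, ∀ a, valAt ((ρ r').K ∪ α) a ∈ EVS S a := fun r' hr' =>
    valAt_mem_EVS fun p hp => (mem_union.mp hp).elim
      (Rule.mem_EVS_of_mem_K (hρS r' hr')) (hα p)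
  have hK : ∀ r' ∈ M, (ρ r').K ⊆ path r' := fun r' hr' =>
    hΓ.2.K_subset_pathFrom (hEV r' hr') satisfies_empty (hρS r' hr')
      ((satisfies_valAt (hρα r' hr')).mono subset_union_left)
  have hK_mono : ∀ r₁ ∈ M, ∀ r₂ ∈ M, path r₁ = path r₂ → r₁.K ⊆ r₂.K := by
    intro r₁ h₁ r₂ h₂ heq
    rw [← hρ r₁ h₁, ← hρ r₂ h₂]
    refine Rule.K_restrict_mono (Rule.K_subset_of_satisfies_valAt ?_)
    have hsub : (ρ r₁).K ⊆ path r₂ := heq ▸ hK r₁ h₁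
    exact (DT.satisfies_pathFrom Γ satisfies_empty).mono hsub
  have hinj : Set.InjOn path M := fun r₁ h₁ r₂ h₂ heq =>
    hMK r₁ h₁ r₂ h₂ ((hK_mono r₁ h₁ r₂ h₂ heq).antisymm (hK_mono r₂ h₂ r₁ h₁ heq.symm))
  calc M.card ≤ (Γ.paths S ∅).card :=
        card_le_card_of_injOn path (fun r' hr' => DT.pathFrom_mem_paths (hEV r' hr') Γ ∅) hinj
    _ ≤ (kS S + 1) ^ Γ.depth S := DT.card_paths_le Γ ∅ hΓ.1

end RoundBounds

lemma log_le_mul_log_of_le_pow {n m h : ℕ} (hn : n ≤ m ^ h) :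
    Real.log n ≤ h * Real.log m := by
  rcases n.eq_zero_or_pos with rfl | hpos
  · simpa using mul_nonneg (Nat.cast_nonneg h) (Real.log_natCast_nonneg m)
  · rw [← Real.log_pow]
    exact Real.log_le_log (by positivity) (by exact_mod_cast hn)

theorem round_bounds_general (S : Finset Rule)
    (α : Finset (ℕ × Val)) (hcons : Consistent α)
    (hα : ∀ p ∈ α, p.1 ∈ attrsS S ∧ p.2 ∈ EVS S p.1)
    (hnα : 0 < nS (sysRestrict S α))
    (M : Finset Rule) (hM : IsMaxSet (sysRestrict S α) M) :
    (betaS M : ℝ) ≤ (hEAR S : ℝ) ∧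
    Real.log M.card ≤ (hEAR S : ℝ) * Real.log (kS S + 1) ∧
    (betaS M : ℝ) * Real.log M.card + 1 ≤
      (hEAR S : ℝ) ^ 2 * Real.log (kS S + 1) + 1 := by
  obtain ⟨Γ, hΓ, hdepth⟩ := DT.exists_solvesEAR_depth_eq_hEAR S
  have hαEV : ∀ p ∈ α, p.2 ∈ EVS S p.1 := fun p hp => (hα p hp).2
  have hMS : ∀ r ∈ M, r ∈ sysRestrict S α := fun r hr => (hM.1 r hr).1
  have hMlhs : ∀ r ∈ M, r.lhs.Nonempty := fun r hr => by
    rw [← card_pos, ← Rule.len, (hM.1 r hr).2]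
    exact dS_pos_of_nS_pos hnα
  have hβ : (betaS M : ℝ) ≤ hEAR S := by
    exact_mod_cast hdepth ▸ betaS_le_depth hcons hαEV (fun r hr => ⟨hMS r hr, hMlhs r hr⟩) hΓ.2
  have hlog : Real.log M.card ≤ hEAR S * Real.log (kS S + 1) := by
    have hcard := hdepth ▸ card_le_pow_depth hαEV hMS hM.2.2 hΓ
    exact_mod_cast log_le_mul_log_of_le_pow hcard
  refine ⟨hβ, hlog, ?_⟩
  have hprod := mul_le_mul hβ hlog (Real.log_natCast_nonneg _) (Nat.cast_nonneg _)
  linarith [show (hEAR S : ℝ) * (hEAR S * Real.log (kS S + 1)) =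
    (hEAR S : ℝ) ^ 2 * Real.log (kS S + 1) by ring]

/-- Let `S` be a decision rule system with `n(S) > 0` and `α` be a consistent
equation system whose attributes belong to `A(S)` and whose values satisfy
`δ ∈ EV_S(a)`. If `S_α` is nonempty and `n(S_α) > 0`, then
`β((S_α)^max) ≤ h_EAR(S)` and `ln |(S_α)^max| ≤ h_EAR(S) · ln (k(S) + 1)`;
consequently
`β((S_α)^max) · ln |(S_α)^max| + 1 ≤ h_EAR(S)² · ln (k(S) + 1) + 1`. -/
theorem round_bounds (S : Finset Rule) (hS : SysWF S) (hn : 0 < nS S)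
    (α : Finset (ℕ × Val)) (hcons : Consistent α)
    (hα : ∀ p ∈ α, p.1 ∈ attrsS S ∧ p.2 ∈ EVS S p.1)
    (hne : (sysRestrict S α).Nonempty) (hnα : 0 < nS (sysRestrict S α))
    (M : Finset Rule) (hM : IsMaxSet (sysRestrict S α) M) :
    (betaS M : ℝ) ≤ (hEAR S : ℝ) ∧
    Real.log M.card ≤ (hEAR S : ℝ) * Real.log (kS S + 1) ∧
    (betaS M : ℝ) * Real.log M.card + 1 ≤
      (hEAR S : ℝ) ^ 2 * Real.log (kS S + 1) + 1 :=
  round_bounds_general S α hcons hα hnα M hM
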